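/- Let C ∈ ℝ^{n₁×n₂×n₃}, D ∈ ℝ^{n₁×l×n₃}, and suppose X* ∈ ℝ^{n₂×l×n₃} satisfies C⋆X* = D. Let X_k, R_k, P_k, Q_k be the iterates of Algorithm 2 from an arbitrary initial tensor X₁. For every k such that Q₁,…,Q_{k−1} are nonzero (so that X_k, R_k, Q_k are defined): Tr[((X* − X_k)⋆Q_kᵀ)^{(1)}] = ‖R_k‖². In particular, if Q_k = 0 then R_k = 0. -/
import Mathlib


open Matrix Filter Topology

noncomputable section

/-- A third-order real tensor of size `n₁ × n₂ × n₃`, identified with the family of its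
frontal slices indexed by `ZMod n₃`. -/
abbrev Tensor (n₁ n₂ n₃ : ℕ) := ZMod n₃ → Matrix (Fin n₁) (Fin n₂) ℝ

/-- The T-product of third-order tensors: `(C ⋆ D)(k) = ∑ j, C (k - j) * D j`. -/
def tProd {n₁ n₂ l n₃ : ℕ} [NeZero n₃] (C : Tensor n₁ n₂ n₃) (D : Tensor n₂ l n₃) :
    Tensor n₁ l n₃ :=
  fun k => ∑ j : ZMod n₃, C (k - j) * D j

/-- The tensor transpose: `(Cᵀ)(k) = (C (-k))ᵀ`. -/
def tTrans {n₁ n₂ n₃ : ℕ} (C : Tensor n₁ n₂ n₃) : Tensor n₂ n₁ n₃ :=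
  fun k => (C (-k))ᵀ

/-- The matrix trace of the first frontal slice of a tensor with square slices. -/
def trFirst {m n₃ : ℕ} (S : Tensor m m n₃) : ℝ :=
  (S 0).trace

/-- The inner product `⟨C, D⟩ = ∑ k i j, C k i j * D k i j`. -/
def tInner {n₁ n₂ n₃ : ℕ} [NeZero n₃] (C D : Tensor n₁ n₂ n₃) : ℝ :=
  ∑ k : ZMod n₃, ∑ i : Fin n₁, ∑ j : Fin n₂, C k i j * D k i j

/-- The Frobenius norm `‖C‖ = √⟨C, C⟩`. -/
def tNorm {n₁ n₂ n₃ : ℕ} [NeZero n₃] (C : Tensor n₁ n₂ n₃) : ℝ :=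
  Real.sqrt (tInner C C)

/-- The block circulant matrix of a tensor: its `(k, l)` block is `C (k - l)`. -/
def bCirc {n n₃ : ℕ} [NeZero n₃] (C : Tensor n n n₃) :
    Matrix (ZMod n₃ × Fin n) (ZMod n₃ × Fin n) ℝ :=
  fun p q => C (p.1 - q.1) p.2 q.2

/-- `C` is T-symmetric positive definite: `Cᵀ = C` and `bCirc C` is positive definite. -/
def TSymPD {n n₃ : ℕ} [NeZero n₃] (C : Tensor n n n₃) : Prop :=
  tTrans C = C ∧ (bCirc C).PosDef

namespace Stmt8Aux

variable {n₁ n₂ l n₃ : ℕ} [NeZero n₃]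

lemma trFirst_eq (A : Tensor n₁ n₂ n₃) (B : Tensor n₁ n₂ n₃) :
    trFirst (tProd A (tTrans B)) = tInner A B := by
  simp only [trFirst, tProd, tTrans, Matrix.trace, Matrix.diag, Matrix.sum_apply,
    Matrix.mul_apply, Matrix.transpose_apply, tInner, zero_sub]
  rw [Finset.sum_comm]
  exact Fintype.sum_equiv (Equiv.neg _) _ _ fun x => by simp

lemma adjoint (C : Tensor n₁ n₂ n₃) (A : Tensor n₂ l n₃) (B : Tensor n₁ l n₃) :
    tInner A (tProd (tTrans C) B) = tInner (tProd C A) B := by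
  have lhs_eq : tInner A (tProd (tTrans C) B) =
      ∑ k : ZMod n₃, ∑ m : ZMod n₃, ∑ p : Fin n₁, ∑ i : Fin n₂, ∑ j : Fin l,
        C (m - k) p i * A k i j * B m p j := by
    simp only [tInner, tProd, tTrans, Matrix.sum_apply, Matrix.mul_apply,
      Matrix.transpose_apply, Finset.mul_sum, Finset.sum_mul, neg_sub]
    refine Finset.sum_congr rfl fun k _ => ?_
    conv_lhs => enter [2, i]; rw [Finset.sum_comm]
    conv_lhs => rw [Finset.sum_comm]
    conv_lhs => enter [2, m, 2, i]; rw [Finset.sum_comm]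
    conv_lhs => enter [2, m]; rw [Finset.sum_comm]
    refine Finset.sum_congr rfl fun m _ => Finset.sum_congr rfl fun p _ =>
      Finset.sum_congr rfl fun i _ => Finset.sum_congr rfl fun j _ => by ring
  have rhs_eq : tInner (tProd C A) B =
      ∑ m : ZMod n₃, ∑ k : ZMod n₃, ∑ p : Fin n₁, ∑ i : Fin n₂, ∑ j : Fin l,
        C (m - k) p i * A k i j * B m p j := by
    simp only [tInner, tProd, Matrix.sum_apply, Matrix.mul_apply,
      Finset.mul_sum, Finset.sum_mul]
    refine Finset.sum_congr rfl fun m _ => ?_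
    conv_lhs => enter [2, p]; rw [Finset.sum_comm]
    conv_lhs => rw [Finset.sum_comm]
    conv_lhs => enter [2, k, 2, p]; rw [Finset.sum_comm]
  rw [lhs_eq, rhs_eq, Finset.sum_comm]

lemma tInner_sub_left (A B Q : Tensor n₁ n₂ n₃) :
    tInner (A - B) Q = tInner A Q - tInner B Q := by
  simp [tInner, sub_mul, Finset.sum_sub_distrib]

lemma tInner_smul_right (c : ℝ) (A Q : Tensor n₁ n₂ n₃) :
    tInner A (c • Q) = c * tInner A Q := by
  simp [tInner, Finset.mul_sum]; ring_nf
  exact Finset.sum_congr rfl fun k _ => Finset.sum_congr rfl fun i _ =>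
    Finset.sum_congr rfl fun j _ => by ring

lemma tInner_sub_right (A B Q : Tensor n₁ n₂ n₃) :
    tInner Q (A - B) = tInner Q A - tInner Q B := by
  simp [tInner, mul_sub, Finset.sum_sub_distrib]

lemma tProd_sub (C : Tensor n₁ n₂ n₃) (A B : Tensor n₂ l n₃) :
    tProd C (A - B) = tProd C A - tProd C B := by
  funext k
  simp [tProd, Matrix.mul_sub, Finset.sum_sub_distrib]

lemma tInner_self_nonneg (A : Tensor n₁ n₂ n₃) : 0 ≤ tInner A A := by
  refine Finset.sum_nonneg fun k _ => Finset.sum_nonneg fun i _ =>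
    Finset.sum_nonneg fun j _ => mul_self_nonneg _

lemma tInner_self_eq_zero {A : Tensor n₁ n₂ n₃} (h : tInner A A = 0) : A = 0 := by
  funext k
  ext i j
  have := (Finset.sum_eq_zero_iff_of_nonneg (fun k _ => Finset.sum_nonneg fun i _ =>
      Finset.sum_nonneg fun j _ => mul_self_nonneg (A k i j))).mp h k (Finset.mem_univ k)
  have := (Finset.sum_eq_zero_iff_of_nonneg (fun i _ =>
      Finset.sum_nonneg fun j _ => mul_self_nonneg (A k i j))).mp this i (Finset.mem_univ i)
  have := (Finset.sum_eq_zero_iff_of_nonneg (fun j _ =>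
      mul_self_nonneg (A k i j))).mp this j (Finset.mem_univ j)
  exact (mul_self_eq_zero).mp this

lemma tNorm_sq (A : Tensor n₁ n₂ n₃) : tNorm A ^ 2 = tInner A A := by
  rw [tNorm, Real.sq_sqrt (tInner_self_nonneg A)]

end Stmt8Aux

open Stmt8Aux

theorem stmt_8 (n₁ n₂ l n₃ : ℕ) [NeZero n₃] (C : Tensor n₁ n₂ n₃)
    (D : Tensor n₁ l n₃) (Xs : Tensor n₂ l n₃) (hXs : tProd C Xs = D)
    (X : ℕ → Tensor n₂ l n₃) (R : ℕ → Tensor n₁ l n₃)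
    (P Q : ℕ → Tensor n₂ l n₃)
    (hR : ∀ i, 1 ≤ i → R i = D - tProd C (X i))
    (hP : ∀ i, 1 ≤ i → P i = tProd (tTrans C) (R i))
    (hQ1 : Q 1 = P 1)
    (hX : ∀ i, 1 ≤ i → X (i + 1) = X i +
      (tInner (R i) (R i) / tInner (Q i) (Q i)) • Q i)
    (hQ : ∀ i, 1 ≤ i → Q (i + 1) = P (i + 1) -
      (trFirst (tProd (tTrans (P (i + 1))) (Q i)) / tInner (Q i) (Q i)) • Q i)
    (k : ℕ) (hk : 1 ≤ k) (hQne : ∀ j, 1 ≤ j → j < k → Q j ≠ 0) :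
    trFirst (tProd (Xs - X k) (tTrans (Q k))) = tNorm (R k) ^ 2 ∧
    (Q k = 0 → R k = 0) := by
  -- the "error inner product with P" identity, valid for any i ≥ 1
  have hEP : ∀ i, 1 ≤ i → tInner (Xs - X i) (P i) = tInner (R i) (R i) := by
    intro i hi
    rw [hP i hi, adjoint, tProd_sub, hXs, ← hR i hi]
  -- main induction
  have key : ∀ i, 1 ≤ i → (∀ j, 1 ≤ j → j < i → Q j ≠ 0) →
      tInner (Xs - X i) (Q i) = tInner (R i) (R i) := by
    intro i hi
    induction i, hi using Nat.le_induction with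
    | base => intro _; rw [hQ1]; exact hEP 1 le_rfl
    | succ m hm ih =>
      intro hne
      have hQm : Q m ≠ 0 := hne m hm (Nat.lt_succ_self m)
      have hQQ : tInner (Q m) (Q m) ≠ 0 := fun h => hQm (tInner_self_eq_zero h)
      have ihm : tInner (Xs - X m) (Q m) = tInner (R m) (R m) :=
        ih fun j h1 h2 => hne j h1 (Nat.lt_succ_of_lt h2)
      -- orthogonality of new error with old direction
      have horth : tInner (Xs - X (m + 1)) (Q m) = 0 := by
        rw [hX m hm]
        have : Xs - (X m + (tInner (R m) (R m) / tInner (Q m) (Q m)) • Q m)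
            = (Xs - X m) - (tInner (R m) (R m) / tInner (Q m) (Q m)) • Q m := by
          abel
        rw [this, tInner_sub_left, ihm]
        have : tInner ((tInner (R m) (R m) / tInner (Q m) (Q m)) • Q m) (Q m)
            = (tInner (R m) (R m) / tInner (Q m) (Q m)) * tInner (Q m) (Q m) := by
          have := tInner_smul_right (tInner (R m) (R m) / tInner (Q m) (Q m)) (Q m) (Q m)
          -- need smul on left; tInner is symmetric in its defining sum
          simp only [tInner, Pi.smul_apply, Matrix.smul_apply, smul_eq_mul,
            Finset.mul_sum] at *
          exact Finset.sum_congr rfl fun k _ => Finset.sum_congr rfl fun i _ =>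
            Finset.sum_congr rfl fun j _ => by ring
        rw [this, div_mul_cancel₀ _ hQQ, sub_self]
      rw [hQ m hm, tInner_sub_right]
      have hsmul : tInner (Xs - X (m + 1))
          ((trFirst (tProd (tTrans (P (m + 1))) (Q m)) / tInner (Q m) (Q m)) • Q m)
          = (trFirst (tProd (tTrans (P (m + 1))) (Q m)) / tInner (Q m) (Q m)) *
            tInner (Xs - X (m + 1)) (Q m) := tInner_smul_right _ _ _
      rw [hsmul, horth, mul_zero, sub_zero]
      exact hEP (m + 1) (Nat.le_add_left 1 m)
  have main := key k hk hQne
  constructor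
  · rw [trFirst_eq, main, tNorm_sq]
  · intro hQk
    have h0 : tInner (R k) (R k) = 0 := by
      rw [← main, hQk]
      simp [tInner]
    exact tInner_self_eq_zero h0
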